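/- Let q ≥ 2 and suppose that for Banach spaces E₁,…,Eₙ every bounded n-linear form on E₁×⋯×Eₙ is multiple (q;q₁,…,qₙ)-summing (with a uniform constant). Then for any further Banach space E_{n+1}, every bounded (n+1)-linear form on E₁×⋯×Eₙ×E_{n+1} is multiple (q;q₁,…,qₙ,1)-summing. -/

import Mathlib

/-!
Fix the last argument of `S` at a Rademacher sum `∑ₖ εₖ yₖ`: its norm is at most the weak
`ℓ_1` norm of `y`, so the hypothesis applies to the resulting `n`-linear forms, uniformly in the
signs `ε`. Averaging over `ε` recovers the full `(n + 1)`-fold sum because the scalar field, like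
any Hilbert space, has cotype `q` with constant `1` for `q ≥ 2`: orthogonality of the signs gives
`𝔼 ‖∑ₖ εₖ cₖ‖² = ∑ₖ ‖cₖ‖²`, and `ℓ_2 ⊆ ℓ_q` together with Jensen's inequality for `t ↦ t^(q/2)`
upgrade this to `∑ₖ ‖cₖ‖^q ≤ 𝔼 ‖∑ₖ εₖ cₖ‖^q`.
-/

open scoped BigOperators

/-- The weak `ℓ_p` norm `‖(x_j)‖_{w,p}`. -/
noncomputable def weakNorm (𝕜 : Type*) [RCLike 𝕜] {E : Type*} [NormedAddCommGroup E]
    [NormedSpace 𝕜 E] (p : ℝ) {m : ℕ} (x : Fin m → E) : ℝ :=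
  sSup {s | ∃ φ : E →L[𝕜] 𝕜, ‖φ‖ ≤ 1 ∧ s = (∑ j, ‖φ (x j)‖ ^ p) ^ p⁻¹}

open Finset

lemma sum_rpow_le_rpow_sum {ι : Type*} (s : Finset ι) {f : ι → ℝ} (hf : ∀ i ∈ s, 0 ≤ f i)
    {r : ℝ} (hr : 1 ≤ r) : ∑ i ∈ s, f i ^ r ≤ (∑ i ∈ s, f i) ^ r := by
  induction s using Finset.cons_induction with
  | empty => simp [Real.zero_rpow (by positivity : r ≠ 0)]
  | cons a s ha ih =>
    rw [forall_mem_cons] at hf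
    rw [sum_cons, sum_cons]
    exact (add_le_add_right (ih hf.2) _).trans
      (Real.add_rpow_le_rpow_add hf.1 (sum_nonneg hf.2) hr)

lemma rpow_expect_le_expect_rpow {ι : Type*} {s : Finset ι} (hs : s.Nonempty) {f : ι → ℝ}
    (hf : ∀ i ∈ s, 0 ≤ f i) {r : ℝ} (hr : 1 ≤ r) :
    (𝔼 i ∈ s, f i) ^ r ≤ 𝔼 i ∈ s, f i ^ r := by
  have hw : ∑ _i ∈ s, (#s : ℝ)⁻¹ = 1 := by
    rw [sum_const, nsmul_eq_mul, mul_inv_cancel₀ (by exact_mod_cast hs.card_pos.ne')]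
  simpa only [expect_eq_sum_div_card, div_eq_inv_mul, mul_sum] using
    Real.rpow_arith_mean_le_arith_mean_rpow s (fun _ => (#s : ℝ)⁻¹) f (fun _ _ => by positivity)
      hw hf hr

lemma expect_units_int (f : ℤˣ → ℝ) : 𝔼 e, f e = (f 1 + f (-1)) / 2 := by
  rw [Fintype.expect_eq_sum_div_card, UnitsInt.univ, sum_pair (by decide), Fintype.card_units_int]
  norm_num

section Rademacher

variable {F : Type*} [NormedAddCommGroup F]

theorem expect_norm_signed_sum_sq (𝕜 : Type*) [RCLike 𝕜] [InnerProductSpace 𝕜 F] {m : ℕ}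
    (c : Fin m → F) :
    𝔼 ε : Fin m → ℤˣ, ‖∑ k, ε k • c k‖ ^ 2 = ∑ k, ‖c k‖ ^ 2 := by
  induction m with
  | zero => simp
  | succ m ih =>
    have parallelogram (a b : F) : (‖a + b‖ ^ 2 + ‖-a + b‖ ^ 2) / 2 = ‖a‖ ^ 2 + ‖b‖ ^ 2 := by
      rw [neg_add_eq_sub, norm_sub_rev, parallelogram_law_with_norm 𝕜]
      ring
    rw [Fintype.expect_equiv (Fin.consEquiv fun _ => ℤˣ).symm _
      (fun p => ‖∑ k, (Fin.cons p.1 p.2 : Fin (m + 1) → ℤˣ) k • c k‖ ^ 2) (fun _ => by simp),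
      ← univ_product_univ, expect_product, expect_comm]
    simp only [Fin.sum_univ_succ, Fin.cons_zero, Fin.cons_succ, expect_units_int, one_smul,
      Units.neg_smul, parallelogram, expect_add_distrib, Fintype.expect_const, ih]

theorem sum_norm_rpow_le_expect_norm_signed_sum_rpow (𝕜 : Type*) [RCLike 𝕜]
    [InnerProductSpace 𝕜 F] {q : ℝ} (hq : 2 ≤ q) {m : ℕ} (c : Fin m → F) :
    ∑ k, ‖c k‖ ^ q ≤ 𝔼 ε : Fin m → ℤˣ, ‖∑ k, ε k • c k‖ ^ q := by
  have hsq (a : F) : (‖a‖ ^ 2) ^ (q / 2) = ‖a‖ ^ q := by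
    rw [← Real.rpow_natCast, ← Real.rpow_mul (norm_nonneg a), Nat.cast_ofNat,
      mul_div_cancel₀ q two_ne_zero]
  calc ∑ k, ‖c k‖ ^ q = ∑ k, (‖c k‖ ^ 2) ^ (q / 2) := by simp only [hsq]
    _ ≤ (∑ k, ‖c k‖ ^ 2) ^ (q / 2) :=
      sum_rpow_le_rpow_sum _ (fun _ _ => by positivity) (by linarith)
    _ = (𝔼 ε : Fin m → ℤˣ, ‖∑ k, ε k • c k‖ ^ 2) ^ (q / 2) := by
      rw [expect_norm_signed_sum_sq 𝕜]
    _ ≤ 𝔼 ε : Fin m → ℤˣ, (‖∑ k, ε k • c k‖ ^ 2) ^ (q / 2) :=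
      rpow_expect_le_expect_rpow univ_nonempty (fun _ _ => by positivity) (by linarith)
    _ = 𝔼 ε : Fin m → ℤˣ, ‖∑ k, ε k • c k‖ ^ q := by simp only [hsq]

end Rademacher

section WeakNorm

variable {𝕜 : Type*} [RCLike 𝕜] {E : Type*} [NormedAddCommGroup E] [NormedSpace 𝕜 E] {m : ℕ}

lemma weakNorm_nonneg (p : ℝ) (x : Fin m → E) : 0 ≤ weakNorm 𝕜 p x :=
  Real.sSup_nonneg fun _ ⟨_, _, hs⟩ => hs ▸ by positivity

lemma le_weakNorm {p : ℝ} (hp : 0 ≤ p) (x : Fin m → E) {φ : E →L[𝕜] 𝕜} (hφ : ‖φ‖ ≤ 1) :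
    (∑ j, ‖φ (x j)‖ ^ p) ^ p⁻¹ ≤ weakNorm 𝕜 p x := by
  refine le_csSup ⟨(∑ j, ‖x j‖ ^ p) ^ p⁻¹, ?_⟩ ⟨φ, hφ, rfl⟩
  rintro _ ⟨ψ, hψ, rfl⟩
  gcongr with j
  exact ψ.le_of_opNorm_le hψ (x j) |>.trans_eq (one_mul _)

lemma norm_signed_sum_le_weakNorm_one (x : Fin m → E) (ε : Fin m → ℤˣ) :
    ‖∑ k, ε k • x k‖ ≤ weakNorm 𝕜 1 x := by
  obtain ⟨φ, hφ, hφx⟩ := exists_dual_vector'' 𝕜 (∑ k, ε k • x k)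
  calc ‖∑ k, ε k • x k‖ = ‖φ (∑ k, ε k • x k)‖ := by simp [hφx]
    _ ≤ ∑ k, ‖φ (ε k • x k)‖ := by rw [map_sum]; exact norm_sum_le _ _
    _ = ∑ k, ‖φ (x k)‖ := sum_congr rfl fun k _ => by
      rw [Units.smul_def, map_zsmul, ← Units.smul_def, norm_units_zsmul]
    _ ≤ weakNorm 𝕜 1 x := by simpa using le_weakNorm zero_le_one x hφ

end WeakNorm

namespace ContinuousMultilinearMap

variable {𝕜 : Type*} [RCLike 𝕜] {n : ℕ} {G : Fin (n + 1) → Type*}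
  [∀ i, NormedAddCommGroup (G i)] [∀ i, NormedSpace 𝕜 (G i)]
  {F : Type*} [NormedAddCommGroup F] [NormedSpace 𝕜 F]

noncomputable def fixLast (S : ContinuousMultilinearMap 𝕜 G F) (v : G (Fin.last n)) :
    ContinuousMultilinearMap 𝕜 (fun i : Fin n => G i.castSucc) F :=
  (ContinuousLinearMap.apply 𝕜 F v).compContinuousMultilinearMap S.curryRight

@[simp]
lemma fixLast_apply (S : ContinuousMultilinearMap 𝕜 G F) (v : G (Fin.last n))
    (z : ∀ i : Fin n, G i.castSucc) : S.fixLast v z = S (Fin.snoc z v) :=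
  S.curryRight_apply z v

lemma norm_fixLast_le (S : ContinuousMultilinearMap 𝕜 G F) (v : G (Fin.last n)) :
    ‖S.fixLast v‖ ≤ ‖S‖ * ‖v‖ :=
  opNorm_le_bound (by positivity) fun z => by
    simpa [Fin.prod_univ_castSucc, mul_assoc, mul_comm ‖v‖] using S.le_opNorm (Fin.snoc z v)

lemma fixLast_signed_sum_apply {m : ℕ} (S : ContinuousMultilinearMap 𝕜 G F)
    (y : Fin m → G (Fin.last n)) (ε : Fin m → ℤˣ) (z : ∀ i : Fin n, G i.castSucc) :
    S.fixLast (∑ k, ε k • y k) z = ∑ k, ε k • S.fixLast (y k) z := by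
  change S.curryRight z (∑ k, ε k • y k) = ∑ k, ε k • S.curryRight z (y k)
  rw [_root_.map_sum]
  simp only [Units.smul_def, map_zsmul]

end ContinuousMultilinearMap

section MultipleSumming

open ContinuousMultilinearMap

variable {𝕜 : Type*} [RCLike 𝕜] {n : ℕ} {G : Fin (n + 1) → Type*}
  [∀ i, NormedAddCommGroup (G i)] [∀ i, NormedSpace 𝕜 (G i)]
  {F : Type*} [NormedAddCommGroup F] [InnerProductSpace 𝕜 F] {q : ℝ} {m : ℕ}

lemma sum_norm_rpow_le_expect_sum_fixLast (hq : 2 ≤ q) (S : ContinuousMultilinearMap 𝕜 G F)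
    (x : ∀ i, Fin m → G i) :
    ∑ j : Fin (n + 1) → Fin m, ‖S (fun i => x i (j i))‖ ^ q ≤
      𝔼 ε : Fin m → ℤˣ, ∑ j : Fin n → Fin m,
        ‖S.fixLast (∑ k, ε k • x (Fin.last n) k) (fun i => x i.castSucc (j i))‖ ^ q := by
  rw [← (Fin.snocEquiv fun _ => Fin m).sum_comp, Fintype.sum_prod_type_right, expect_sum_comm]
  gcongr with j
  have hsnoc (k : Fin m) : (fun i => x i ((Fin.snocEquiv fun _ => Fin m) (k, j) i)) =
      Fin.snoc (fun i => x i.castSucc (j i)) (x (Fin.last n) k) := by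
    funext i
    cases i using Fin.lastCases <;> simp
  simp only [fixLast_signed_sum_apply]
  simpa only [hsnoc, fixLast_apply] using
    sum_norm_rpow_le_expect_norm_signed_sum_rpow 𝕜 hq
      (fun k => S.fixLast (x _ k) (fun i => x i.castSucc (j i)))

theorem sum_rpow_inv_le_mul_weakNorm_one_of_fixLast (hq : 2 ≤ q) {C : ℝ} (hC : 0 ≤ C)
    (S : ContinuousMultilinearMap 𝕜 G F) (x : ∀ i, Fin m → G i)
    (H : ∀ T : ContinuousMultilinearMap 𝕜 (fun i : Fin n => G i.castSucc) F,
      (∑ j : Fin n → Fin m, ‖T (fun i => x i.castSucc (j i))‖ ^ q) ^ q⁻¹ ≤ C * ‖T‖) :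
    (∑ j : Fin (n + 1) → Fin m, ‖S (fun i => x i (j i))‖ ^ q) ^ q⁻¹ ≤
      C * ‖S‖ * weakNorm 𝕜 1 (x (Fin.last n)) := by
  have hq₀ : 0 < q := by linarith
  have hbound : 0 ≤ C * ‖S‖ * weakNorm 𝕜 1 (x (Fin.last n)) :=
    mul_nonneg (mul_nonneg hC (norm_nonneg S)) (weakNorm_nonneg _ _)
  have hfixLast (ε : Fin m → ℤˣ) :
      ∑ j : Fin n → Fin m,
          ‖S.fixLast (∑ k, ε k • x (Fin.last n) k) (fun i => x i.castSucc (j i))‖ ^ q ≤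
        (C * ‖S‖ * weakNorm 𝕜 1 (x (Fin.last n))) ^ q := by
    rw [← Real.rpow_inv_le_iff_of_pos (sum_nonneg fun _ _ => by positivity) hbound hq₀]
    calc _ ≤ C * ‖S.fixLast (∑ k, ε k • x (Fin.last n) k)‖ := H _
      _ ≤ C * (‖S‖ * weakNorm 𝕜 1 (x (Fin.last n))) := by
        gcongr
        exact (norm_fixLast_le _ _).trans (by gcongr; exact norm_signed_sum_le_weakNorm_one _ _)
      _ = C * ‖S‖ * weakNorm 𝕜 1 (x (Fin.last n)) := (mul_assoc _ _ _).symm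
  rw [Real.rpow_inv_le_iff_of_pos (sum_nonneg fun _ _ => by positivity) hbound hq₀]
  calc _ ≤ _ := sum_norm_rpow_le_expect_sum_fixLast hq S x
    _ ≤ 𝔼 _ε : Fin m → ℤˣ, (C * ‖S‖ * weakNorm 𝕜 1 (x (Fin.last n))) ^ q :=
      expect_le_expect fun ε _ => hfixLast ε
    _ = _ := Fintype.expect_const _

end MultipleSumming

theorem multiple_summing_extension_general {𝕜 : Type*} [RCLike 𝕜] {n : ℕ}
    {G : Fin (n + 1) → Type*}
    [∀ i, NormedAddCommGroup (G i)] [∀ i, NormedSpace 𝕜 (G i)]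
    (q : ℝ) (hq : 2 ≤ q) (p : Fin (n + 1) → ℝ)
    (hlast : p (Fin.last n) = 1)
    (hyp : ∃ c₁, 0 ≤ c₁ ∧
      ∀ (T : ContinuousMultilinearMap 𝕜 (fun i : Fin n => G i.castSucc) 𝕜)
        (m : ℕ) (x : ∀ i : Fin n, Fin m → G i.castSucc),
        (∑ j : Fin n → Fin m, ‖T (fun i => x i (j i))‖ ^ q) ^ q⁻¹ ≤
          c₁ * ‖T‖ * ∏ i, weakNorm 𝕜 (p i.castSucc) (x i)) :
    ∃ c₂, 0 ≤ c₂ ∧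
      ∀ (S : ContinuousMultilinearMap 𝕜 G 𝕜)
        (m : ℕ) (x : ∀ i : Fin (n + 1), Fin m → G i),
        (∑ j : Fin (n + 1) → Fin m, ‖S (fun i => x i (j i))‖ ^ q) ^ q⁻¹ ≤
          c₂ * ‖S‖ * ∏ i, weakNorm 𝕜 (p i) (x i) := by
  obtain ⟨c₁, hc₁, H⟩ := hyp
  refine ⟨c₁, hc₁, fun S m x => ?_⟩
  rw [Fin.prod_univ_castSucc, hlast, ← mul_assoc, mul_right_comm c₁]
  exact sum_rpow_inv_le_mul_weakNorm_one_of_fixLast hq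
    (mul_nonneg hc₁ (prod_nonneg fun i _ => weakNorm_nonneg _ _)) S x
    fun T => (H T m _).trans_eq (mul_right_comm _ _ _)

/-- Extension principle: if every bounded `n`-linear form on `G₀ × ⋯ × G_{n-1}` is
multiple `(q; q₁,…,qₙ)`-summing with a uniform constant, then every bounded
`(n+1)`-linear form on `G₀ × ⋯ × Gₙ` is multiple `(q; q₁,…,qₙ,1)`-summing
(with a uniform constant), provided `q ≥ 2`. -/
theorem multiple_summing_extension {𝕜 : Type*} [RCLike 𝕜] {n : ℕ}
    {G : Fin (n + 1) → Type*}
    [∀ i, NormedAddCommGroup (G i)] [∀ i, NormedSpace 𝕜 (G i)] [∀ i, CompleteSpace (G i)]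
    (q : ℝ) (hq : 2 ≤ q) (p : Fin (n + 1) → ℝ) (hp : ∀ i, 1 ≤ p i)
    (hlast : p (Fin.last n) = 1)
    (hyp : ∃ c₁, 0 ≤ c₁ ∧
      ∀ (T : ContinuousMultilinearMap 𝕜 (fun i : Fin n => G i.castSucc) 𝕜)
        (m : ℕ) (x : ∀ i : Fin n, Fin m → G i.castSucc),
        (∑ j : Fin n → Fin m, ‖T (fun i => x i (j i))‖ ^ q) ^ q⁻¹ ≤
          c₁ * ‖T‖ * ∏ i, weakNorm 𝕜 (p i.castSucc) (x i)) :
    ∃ c₂, 0 ≤ c₂ ∧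
      ∀ (S : ContinuousMultilinearMap 𝕜 G 𝕜)
        (m : ℕ) (x : ∀ i : Fin (n + 1), Fin m → G i),
        (∑ j : Fin (n + 1) → Fin m, ‖S (fun i => x i (j i))‖ ^ q) ^ q⁻¹ ≤
          c₂ * ‖S‖ * ∏ i, weakNorm 𝕜 (p i) (x i) :=
  multiple_summing_extension_general q hq p hlast hyp
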